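/- The composite U_n ∘ U_{n−1} ∘ ⋯ ∘ U_1 equals D, the generalized permutation map associated to the Garside element: explicitly, (U_n ∘ ⋯ ∘ U_1)(e_{1,j}) = t^{n−j+2} q^{j−n−3} · e_{j−1,n+1} for 2 ≤ j ≤ n+1, and (U_n ∘ ⋯ ∘ U_1)(e_{i,j}) = t q⁻¹ · e_{i−1,j−1} for 2 ≤ i < j ≤ n+1. -/
import Mathlib


open Finset

/-- `compSeq U a L = U (a + L - 1) ∘ ⋯ ∘ U (a + 1) ∘ U a` (the identity if `L = 0`).
In particular `compSeq U 1 n = U n ∘ ⋯ ∘ U 1`. -/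
def compSeq {R : Type*} [CommSemiring R] {V : Type*} [AddCommMonoid V] [Module R V]
    (U : ℕ → Module.End R V) (a : ℕ) : ℕ → Module.End R V
  | 0 => 1
  | L + 1 => U (a + L) * compSeq U a L

/-- The composite `U_n ∘ ⋯ ∘ U_1` of the generalized permutation endomorphisms equals
the generalized permutation map `D` associated to the Garside element: explicitly,
`(U_n ∘ ⋯ ∘ U_1)(e 1 j) = t^{n-j+2} q^{j-n-3} • e (j-1) (n+1)` for `2 ≤ j ≤ n+1`, and
`(U_n ∘ ⋯ ∘ U_1)(e i j) = t q⁻¹ • e (i-1) (j-1)` for `2 ≤ i < j ≤ n+1`. -/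
theorem U_composite_is_Garside_permutation {R : Type*} [CommRing R] (q t : Rˣ)
    {V : Type*} [AddCommGroup V] [Module R V]
    (n : ℕ) (hn : 1 ≤ n)
    (e : ℕ → ℕ → V)
    (U : ℕ → Module.End R V)
    (hU : ∀ m, 1 ≤ m → m ≤ n → ∀ i j, 1 ≤ i → i < j → j ≤ n + 1 →
      U m (e i j) =
        if i = m ∧ j = m + 1 then ((t * q⁻¹ * q⁻¹ : Rˣ) : R) • e m (m + 1)
        else if i = m ∧ m + 1 < j then e (m + 1) j
        else if i = m + 1 then ((t * q⁻¹ : Rˣ) : R) • e m j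
        else if j = m then ((t * q⁻¹ : Rˣ) : R) • e i (m + 1)
        else if j = m + 1 then e i m
        else e i j) :
    (∀ j, 2 ≤ j → j ≤ n + 1 →
      compSeq U 1 n (e 1 j) =
        ((t ^ (n + 2 - j) * q ^ ((j : ℤ) - (n : ℤ) - 3) : Rˣ) : R) • e (j - 1) (n + 1)) ∧
    (∀ i j, 2 ≤ i → i < j → j ≤ n + 1 →
      compSeq U 1 n (e i j) = ((t * q⁻¹ : Rˣ) : R) • e (i - 1) (j - 1)) := by
  have hstep : ∀ L v, compSeq U 1 (L + 1) v = U (L + 1) (compSeq U 1 L v) := by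
    intro L v
    show (U (1 + L) * compSeq U 1 L) v = _
    rw [Nat.add_comm 1 L]
    rfl
  -- Key lemma for basis vectors e i j with i ≥ 2.
  have key2 : ∀ L, L ≤ n → ∀ i j, 2 ≤ i → i < j → j ≤ n + 1 →
      compSeq U 1 L (e i j) =
        if L + 2 ≤ i then e i j
        else if L + 2 ≤ j then ((t * q⁻¹ : Rˣ) : R) • e (i - 1) j
        else ((t * q⁻¹ : Rˣ) : R) • e (i - 1) (j - 1) := by
    intro L
    induction L with
    | zero =>
      intro _ i j hi hij hj
      show (1 : Module.End R V) (e i j) = _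
      rw [Module.End.one_apply, if_pos (by omega)]
    | succ L ih =>
      intro hL i j hi hij hj
      rw [hstep, ih (by omega) i j hi hij hj]
      by_cases hc1 : L + 3 ≤ i
      · rw [if_pos (by omega), hU (L + 1) (by omega) (by omega) i j (by omega) hij hj,
          if_neg (by omega), if_neg (by omega), if_neg (by omega), if_neg (by omega),
          if_neg (by omega), if_pos (by omega)]
      by_cases hc2 : i = L + 2
      · rw [if_pos (by omega), hU (L + 1) (by omega) (by omega) i j (by omega) hij hj,
          if_neg (by omega), if_neg (by omega), if_pos (by omega),
          if_neg (by omega), if_pos (by omega)]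
        have : L + 1 = i - 1 := by omega
        rw [this]
      by_cases hc3 : L + 3 ≤ j
      · rw [if_neg (by omega), if_pos (by omega), map_smul,
          hU (L + 1) (by omega) (by omega) (i - 1) j (by omega) (by omega) hj,
          if_neg (by omega), if_neg (by omega), if_neg (by omega), if_neg (by omega),
          if_neg (by omega), if_neg (by omega), if_pos (by omega)]
      by_cases hc4 : j = L + 2
      · rw [if_neg (by omega), if_pos (by omega), map_smul,
          hU (L + 1) (by omega) (by omega) (i - 1) j (by omega) (by omega) hj,
          if_neg (by omega), if_neg (by omega), if_neg (by omega), if_neg (by omega),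
          if_pos (by omega), if_neg (by omega), if_neg (by omega)]
        have : L + 1 = j - 1 := by omega
        rw [this]
      · rw [if_neg (by omega), if_neg (by omega), map_smul,
          hU (L + 1) (by omega) (by omega) (i - 1) (j - 1) (by omega) (by omega) (by omega),
          if_neg (by omega), if_neg (by omega), if_neg (by omega), if_neg (by omega),
          if_neg (by omega), if_neg (by omega), if_neg (by omega)]
  -- Key lemma for basis vectors e 1 j.
  have key1 : ∀ L, L ≤ n → ∀ j, 2 ≤ j → j ≤ n + 1 →
      compSeq U 1 L (e 1 j) =
        if L + 1 < j then e (L + 1) j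
        else ((t ^ (L + 2 - j) * q⁻¹ ^ (L + 3 - j) : Rˣ) : R) • e (j - 1) (L + 1) := by
    intro L
    induction L with
    | zero =>
      intro _ j hj hj'
      show (1 : Module.End R V) (e 1 j) = _
      rw [Module.End.one_apply, if_pos (by omega)]
    | succ L ih =>
      intro hL j hj hj'
      rw [hstep, ih (by omega) j hj hj']
      by_cases hc1 : L + 2 < j
      · rw [if_pos (by omega), hU (L + 1) (by omega) (by omega) (L + 1) j (by omega)
          (by omega) hj', if_neg (by omega), if_pos (by omega), if_pos (by omega)]
      by_cases hc2 : j = L + 2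
      · rw [if_pos (by omega), hU (L + 1) (by omega) (by omega) (L + 1) j (by omega)
          (by omega) hj', if_pos (by omega), if_neg (by omega)]
        have h1 : L + 1 + 2 - j = 1 := by omega
        have h2 : L + 1 + 3 - j = 2 := by omega
        have h3 : L + 1 = j - 1 := by omega
        rw [h1, h2, h3, pow_one, pow_two, hc2]
        congr 1
        push_cast
        ring
      · rw [if_neg (by omega), if_neg (by omega), map_smul,
          hU (L + 1) (by omega) (by omega) (j - 1) (L + 1) (by omega) (by omega) (by omega),
          if_neg (by omega), if_neg (by omega), if_neg (by omega), if_pos (by omega)]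
        rw [smul_smul]
        have hb : L + 3 - j = (L + 2 - j) + 1 := by omega
        have h2 : L + 1 + 3 - j = (L + 2 - j) + 2 := by omega
        rw [hb, h2]
        generalize (L + 2 - j) = a
        congr 1
        push_cast
        ring
  constructor
  · intro j hj hj'
    rw [key1 n le_rfl j hj hj', if_neg (by omega)]
    congr 2
    have hk : (j : ℤ) - (n : ℤ) - 3 = -((n + 3 - j : ℕ) : ℤ) := by omega
    rw [hk, zpow_neg, zpow_natCast, ← inv_pow]
  · intro i j hi hij hj
    rw [key2 n le_rfl i j hi hij hj, if_neg (by omega), if_neg (by omega)]
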